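/- Let R be a commutative integral domain and let ⋆ be a semistar operation of finite type on R. If R satisfies the ascending chain condition on radical quasi-⋆-ideals, then ⋆-Min(I) is finite for every nonzero ideal I of R. -/

import Mathlib

open Pointwise

/-- A semistar operation on an integral domain `R` with quotient field `K`:
a map `E ↦ E^⋆` on the nonzero `R`-submodules of `K` satisfying the usual axioms.
(The map is defined on all submodules, but the axioms are only required for the
nonzero ones.) -/
structure SemistarOperation (R K : Type*) [CommRing R] [IsDomain R] [Field K]
    [Algebra R K] [IsFractionRing R K] where
  star : Submodule R K → Submodule R K
  smul_star : ∀ (x : K), x ≠ 0 → ∀ E : Submodule R K, E ≠ ⊥ → star (x • E) = x • star E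
  mono : ∀ E F : Submodule R K, E ≠ ⊥ → E ≤ F → star E ≤ star F
  le_star : ∀ E : Submodule R K, E ≠ ⊥ → E ≤ star E
  star_star : ∀ E : Submodule R K, E ≠ ⊥ → star (star E) = star E

namespace SemistarOperation

variable {R K : Type*} [CommRing R] [IsDomain R] [Field K] [Algebra R K] [IsFractionRing R K]
variable (s : SemistarOperation R K)

/-- `⋆` is of finite type: for every nonzero submodule `E`, the module `E^⋆` is the
union of the `F^⋆` over the nonzero finitely generated submodules `F ⊆ E`. -/
def FiniteType : Prop :=
  ∀ E : Submodule R K, E ≠ ⊥ → ∀ x : K,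
    x ∈ s.star E ↔ ∃ F : Submodule R K, F.FG ∧ F ≠ ⊥ ∧ F ≤ E ∧ x ∈ s.star F

/-- `I^⋆`, for an ideal `I` of `R` (viewing `I` as a submodule of `K`). -/
def idealStar (I : Ideal R) : Submodule R K :=
  s.star (Submodule.map (Algebra.linearMap R K) I)

/-- `I^⋆ ∩ R`, as an ideal of `R`. -/
def contract (I : Ideal R) : Ideal R :=
  Submodule.comap (Algebra.linearMap R K) (s.idealStar I)

/-- A (nonzero) ideal `I` of `R` is a quasi-`⋆`-ideal if `I^⋆ ∩ R = I`. -/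
def IsQuasiStarIdeal (I : Ideal R) : Prop :=
  I ≠ ⊥ ∧ s.contract I = I

/-- A nonzero ideal `L` of `R` is `⋆`-finite if `L^⋆ = F^⋆` for some nonzero
finitely generated ideal `F` of `R`. -/
def IsStarFinite (L : Ideal R) : Prop :=
  L ≠ ⊥ ∧ ∃ F : Ideal R, F.FG ∧ F ≠ ⊥ ∧ s.idealStar F = s.idealStar L

/-- `⋆` is stable: it distributes over finite intersections (of nonzero submodules
with nonzero intersection). -/
def Stable : Prop :=
  ∀ E F : Submodule R K, E ≠ ⊥ → F ≠ ⊥ → E ⊓ F ≠ ⊥ →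
    s.star (E ⊓ F) = s.star E ⊓ s.star F

/-- `⋆-Min(I)`: the set of quasi-`⋆`-prime ideals of `R` minimal over `I`. -/
def starMin (I : Ideal R) : Set (Ideal R) :=
  {P | Minimal (fun Q : Ideal R => Q.IsPrime ∧ s.IsQuasiStarIdeal Q ∧ I ≤ Q) P}

/-- A nonzero ideal `I` of `R` is a `⋆`-SFT-ideal if there are a finitely generated
ideal `J ⊆ I` and a positive integer `k` with `a ^ k ∈ J^⋆` for every `a ∈ I^⋆`. -/
def IsSFT (I : Ideal R) : Prop :=
  I ≠ ⊥ ∧ ∃ J : Ideal R, J.FG ∧ J ≤ I ∧ ∃ k : ℕ, 0 < k ∧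
    ∀ a ∈ s.idealStar I, a ^ k ∈ s.idealStar J

/-- `R` is a `⋆`-SFT-ring if every nonzero ideal of `R` is a `⋆`-SFT-ideal. -/
def IsSFTRing : Prop := ∀ I : Ideal R, I ≠ ⊥ → s.IsSFT I

end SemistarOperation

/-! Finite type makes the radical of a quasi-`⋆`-ideal `J` a quasi-`⋆`-ideal: if `r ∈ (√J)^⋆`,
then `r ∈ F^⋆` for a finitely generated `F ⊆ √J`, so `F^n ⊆ J` for some `n` and
`r^n ∈ (F^⋆)^n ⊆ (F^n)^⋆ ⊆ J^⋆`. Since a quasi-`⋆`-prime contains `I` iff it contains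
`√(I^⋆ ∩ R)`, we may replace `I` by this radical quasi-`⋆`-ideal and argue by Noetherian
induction. If `J` is not prime, pick `ab ∈ J` with `a, b ∉ J`: every `P ∈ ⋆-Min(J)` contains `a`
or `b`, hence lies in `⋆-Min` of `√((J + aR)^⋆ ∩ R)` or of `√((J + bR)^⋆ ∩ R)`, both strictly
larger than `J`. -/

namespace SemistarOperation

variable {R K : Type*} [CommRing R] [IsDomain R] [Field K] [Algebra R K] [IsFractionRing R K]
variable (s : SemistarOperation R K)

omit [IsDomain R] in
lemma map_algebraLinearMap_ne_bot {I : Ideal R} (hI : I ≠ ⊥) :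
    Submodule.map (Algebra.linearMap R K) I ≠ ⊥ := by
  rw [Ne, ← Submodule.map_bot (Algebra.linearMap R K)]
  exact (Submodule.map_injective_of_injective (IsFractionRing.injective R K)).ne hI

lemma star_ne_bot {E : Submodule R K} (hE : E ≠ ⊥) : s.star E ≠ ⊥ :=
  ne_bot_of_le_ne_bot hE (s.le_star E hE)

lemma le_contract {I : Ideal R} (hI : I ≠ ⊥) : I ≤ s.contract I :=
  Submodule.map_le_iff_le_comap.mp (s.le_star _ (map_algebraLinearMap_ne_bot hI))

lemma contract_ne_bot {I : Ideal R} (hI : I ≠ ⊥) : s.contract I ≠ ⊥ :=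
  ne_bot_of_le_ne_bot hI (s.le_contract hI)

lemma contract_mono {I J : Ideal R} (hI : I ≠ ⊥) (h : I ≤ J) : s.contract I ≤ s.contract J :=
  Submodule.comap_mono (s.mono _ _ (map_algebraLinearMap_ne_bot hI) (Submodule.map_mono h))

lemma contract_le_of_le {I P : Ideal R} (hI : I ≠ ⊥) (hP : s.IsQuasiStarIdeal P) (h : I ≤ P) :
    s.contract I ≤ P :=
  hP.2 ▸ s.contract_mono hI h

lemma idealStar_contract {I : Ideal R} (hI : I ≠ ⊥) :
    s.idealStar (s.contract I) = s.idealStar I := by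
  have hmap := map_algebraLinearMap_ne_bot (K := K) hI
  refine le_antisymm ?_ (s.mono _ _ hmap (Submodule.map_mono (s.le_contract hI)))
  calc s.idealStar (s.contract I) ≤ s.star (s.idealStar I) :=
        s.mono _ _ (map_algebraLinearMap_ne_bot (s.contract_ne_bot hI))
          (Submodule.map_comap_le _ _)
    _ = s.idealStar I := s.star_star _ hmap

lemma isQuasiStarIdeal_contract {I : Ideal R} (hI : I ≠ ⊥) :
    s.IsQuasiStarIdeal (s.contract I) :=
  ⟨s.contract_ne_bot hI, congrArg (Submodule.comap _) (s.idealStar_contract hI)⟩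

lemma mul_star_le (E : Submodule R K) {F : Submodule R K} (hF : F ≠ ⊥) :
    E * s.star F ≤ s.star (E * F) := by
  refine Submodule.mul_le.mpr fun m hm n hn => ?_
  rcases eq_or_ne m 0 with rfl | hm0
  · simp
  have hspan : (R ∙ m) ≤ E := (Submodule.span_singleton_le_iff_mem m E).mpr hm
  have hmF : m • F ≠ ⊥ := by
    rw [← Submodule.span_singleton_mul]
    exact mul_ne_zero (Submodule.span_singleton_eq_bot.not.mpr hm0) hF
  have hmn : m * n ∈ s.star (m • F) := by
    rw [s.smul_star m hm0 F hF]
    exact Submodule.smul_mem_pointwise_smul n m _ hn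
  refine s.mono _ _ hmF ?_ hmn
  rw [← Submodule.span_singleton_mul]
  exact mul_le_mul_left hspan F

lemma star_mul_star_le {E F : Submodule R K} (hE : E ≠ ⊥) (hF : F ≠ ⊥) :
    s.star E * s.star F ≤ s.star (E * F) :=
  calc s.star E * s.star F ≤ s.star (E * s.star F) := by
        rw [mul_comm, mul_comm E]; exact s.mul_star_le _ hE
    _ ≤ s.star (s.star (E * F)) :=
        s.mono _ _ (mul_ne_zero hE (s.star_ne_bot hF)) (s.mul_star_le E hF)
    _ = s.star (E * F) := s.star_star _ (mul_ne_zero hE hF)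

lemma contract_mul_contract_le {I J : Ideal R} (hI : I ≠ ⊥) (hJ : J ≠ ⊥) :
    s.contract I * s.contract J ≤ s.contract (I * J) := by
  refine Submodule.mul_le.mpr fun a ha b hb => ?_
  change algebraMap R K (a * b) ∈ s.star (IsLocalization.coeSubmodule K (I * J))
  rw [map_mul, IsLocalization.coeSubmodule_mul]
  exact s.star_mul_star_le (map_algebraLinearMap_ne_bot hI) (map_algebraLinearMap_ne_bot hJ)
    (Submodule.mul_mem_mul ha hb)

lemma contract_pow_le {I : Ideal R} (hI : I ≠ ⊥) (n : ℕ) :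
    s.contract I ^ n ≤ s.contract (I ^ n) := by
  induction n with
  | zero => simpa [Ideal.one_eq_top] using s.le_contract (R := R) top_ne_bot
  | succ n ih =>
    rw [pow_succ, pow_succ]
    exact (mul_le_mul' ih le_rfl).trans (s.contract_mul_contract_le (pow_ne_zero n hI) hI)

variable {s}

lemma exists_fg_le_of_mem_contract (hs : s.FiniteType) {I : Ideal R} (hI : I ≠ ⊥) {r : R}
    (hr : r ∈ s.contract I) : ∃ F : Ideal R, F.FG ∧ F ≠ ⊥ ∧ F ≤ I ∧ r ∈ s.contract F := by
  have hf : Function.Injective (Algebra.linearMap R K) := IsFractionRing.injective R K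
  obtain ⟨F, hFfg, hF0, hFI, hrF⟩ := (hs _ (map_algebraLinearMap_ne_bot hI) _).mp hr
  set F₀ := Submodule.comap (Algebra.linearMap R K) F
  have hmap : Submodule.map (Algebra.linearMap R K) F₀ = F :=
    Submodule.map_comap_eq_of_le (hFI.trans LinearMap.map_le_range)
  refine ⟨F₀, Submodule.fg_of_fg_map_injective _ hf (hmap.symm ▸ hFfg), ?_, ?_, ?_⟩
  · rintro h
    exact hF0 (by rw [← hmap, h, Submodule.map_bot])
  · simpa only [Submodule.comap_map_eq_of_injective hf] using
      Submodule.comap_mono (f := Algebra.linearMap R K) hFI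
  · change algebraMap R K r ∈ s.star (Submodule.map _ F₀)
    rwa [hmap]

lemma IsQuasiStarIdeal.radical (hs : s.FiniteType) {J : Ideal R} (hJ : s.IsQuasiStarIdeal J) :
    s.IsQuasiStarIdeal J.radical := by
  have hrad : J.radical ≠ ⊥ := ne_bot_of_le_ne_bot hJ.1 J.le_radical
  refine ⟨hrad, le_antisymm (fun r hr => ?_) (s.le_contract hrad)⟩
  obtain ⟨F, hFfg, hF0, hFJ, hrF⟩ := exists_fg_le_of_mem_contract hs hrad hr
  obtain ⟨n, hn⟩ := Ideal.exists_pow_le_of_le_radical_of_fg hFJ hFfg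
  exact ⟨n, hJ.2 ▸ s.contract_mono (pow_ne_zero n hF0) hn
    (s.contract_pow_le hF0 n (Ideal.pow_mem_pow hrF n))⟩

lemma isQuasiStarIdeal_radical_contract (hs : s.FiniteType) {I : Ideal R} (hI : I ≠ ⊥) :
    s.IsQuasiStarIdeal (s.contract I).radical :=
  (s.isQuasiStarIdeal_contract hI).radical hs

lemma radical_contract_le_iff {I P : Ideal R} (hI : I ≠ ⊥) (hP : P.IsPrime)
    (hPq : s.IsQuasiStarIdeal P) : (s.contract I).radical ≤ P ↔ I ≤ P :=
  ⟨(s.le_contract hI).trans Ideal.le_radical |>.trans,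
    fun h => hP.radical_le_iff.mpr (s.contract_le_of_le hI hPq h)⟩

lemma starMin_congr {I J : Ideal R}
    (h : ∀ P : Ideal R, P.IsPrime → s.IsQuasiStarIdeal P → (I ≤ P ↔ J ≤ P)) :
    s.starMin I = s.starMin J := by
  have hfun : (fun Q : Ideal R => Q.IsPrime ∧ s.IsQuasiStarIdeal Q ∧ I ≤ Q) =
      fun Q => Q.IsPrime ∧ s.IsQuasiStarIdeal Q ∧ J ≤ Q := by
    ext Q
    exact and_congr_right fun hQ => and_congr_right (h Q hQ)
  simp only [starMin, hfun]

lemma starMin_radical_contract {I : Ideal R} (hI : I ≠ ⊥) :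
    s.starMin (s.contract I).radical = s.starMin I :=
  starMin_congr fun _ hP hPq => radical_contract_le_iff hI hP hPq

lemma mem_starMin_of_le {I J P : Ideal R} (hP : P ∈ s.starMin I) (hIJ : I ≤ J) (hJP : J ≤ P) :
    P ∈ s.starMin J :=
  ⟨⟨hP.1.1, hP.1.2.1, hJP⟩, fun _ hQ => hP.2 ⟨hQ.1, hQ.2.1, hIJ.trans hQ.2.2⟩⟩

lemma starMin_top : s.starMin ⊤ = ∅ :=
  Set.eq_empty_of_forall_notMem fun _ hP => hP.1.1.ne_top (top_le_iff.mp hP.1.2.2)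

lemma starMin_subset_singleton_of_isPrime {J : Ideal R} (hJ : J.IsPrime)
    (hJq : s.IsQuasiStarIdeal J) : s.starMin J ⊆ {J} :=
  fun _ hP => le_antisymm (hP.2 ⟨hJ, hJq, le_rfl⟩ hP.1.2.2) hP.1.2.2

lemma starMin_subset_starMin_radical_contract_sup_span {J : Ideal R} (hJ : J ≠ ⊥) {a b : R}
    (hab : a * b ∈ J) :
    s.starMin J ⊆ s.starMin (s.contract (J ⊔ Ideal.span {a})).radical ∪
      s.starMin (s.contract (J ⊔ Ideal.span {b})).radical := by
  have hsup (c : R) : J ⊔ Ideal.span {c} ≠ ⊥ := ne_bot_of_le_ne_bot hJ le_sup_left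
  intro P hP
  rw [starMin_radical_contract (hsup a), starMin_radical_contract (hsup b)]
  have hJP : J ≤ P := hP.1.2.2
  have hmem (c : R) (hc : c ∈ P) : P ∈ s.starMin (J ⊔ Ideal.span {c}) :=
    mem_starMin_of_le hP le_sup_left (sup_le hJP (P.span_singleton_le_iff_mem.mpr hc))
  exact (hP.1.1.mem_or_mem (hJP hab)).imp (hmem a) (hmem b)

lemma lt_radical_contract_sup_span {J : Ideal R} (hJ : J ≠ ⊥) {a : R} (ha : a ∉ J) :
    J < (s.contract (J ⊔ Ideal.span {a})).radical := by
  have hsup : J ⊔ Ideal.span {a} ≤ (s.contract (J ⊔ Ideal.span {a})).radical :=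
    (s.le_contract (ne_bot_of_le_ne_bot hJ le_sup_left)).trans Ideal.le_radical
  exact lt_of_le_of_ne (le_sup_left.trans hsup)
    fun h => ha (h ▸ hsup (Ideal.mem_sup_right (Ideal.mem_span_singleton_self a)))

variable (s) in
abbrev RadicalQuasiStarIdeal : Type _ := {J : Ideal R // s.IsQuasiStarIdeal J ∧ J.radical = J}

lemma wellFoundedGT_radicalQuasiStarIdeal
    (hacc : ∀ f : ℕ →o Ideal R, (∀ n, s.IsQuasiStarIdeal (f n) ∧ (f n).radical = f n) →
      ∃ n, ∀ m, n ≤ m → f m = f n) :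
    WellFoundedGT s.RadicalQuasiStarIdeal := by
  refine wellFoundedGT_iff_monotone_chain_condition.mpr fun f => ?_
  obtain ⟨n, hn⟩ := hacc ((OrderHom.Subtype.val _).comp f) fun n => (f n).2
  exact ⟨n, fun m hm => Subtype.ext (hn m hm).symm⟩

lemma starMin_finite_of_wellFoundedGT (hs : s.FiniteType) [WellFoundedGT s.RadicalQuasiStarIdeal]
    (J : s.RadicalQuasiStarIdeal) : (s.starMin J.1).Finite := by
  induction J using WellFoundedGT.induction with
  | _ J ih =>
    cases J with | mk J hJ
    have hJq : s.IsQuasiStarIdeal J := hJ.1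
    by_cases hJt : J = ⊤
    · simp [hJt, starMin_top]
    by_cases hJp : J.IsPrime
    · exact (Set.finite_singleton J).subset (starMin_subset_singleton_of_isPrime hJp hJq)
    obtain ⟨a, b, hab, ha, hb⟩ : ∃ a b, a * b ∈ J ∧ a ∉ J ∧ b ∉ J := by
      simpa [Ideal.isPrime_iff, hJt] using hJp
    have hnext (c : R) (hc : c ∉ J) :
        (s.starMin (s.contract (J ⊔ Ideal.span {c})).radical).Finite :=
      ih ⟨_, isQuasiStarIdeal_radical_contract hs (ne_bot_of_le_ne_bot hJq.1 le_sup_left),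
        Ideal.radical_idem _⟩ (lt_radical_contract_sup_span hJq.1 hc)
    exact ((hnext a ha).union (hnext b hb)).subset
      (starMin_subset_starMin_radical_contract_sup_span hJq.1 hab)

end SemistarOperation

/-- Let `⋆` be a semistar operation of finite type on the integral domain `R`.  If
`R` satisfies the a.c.c. on radical quasi-`⋆`-ideals, then `⋆-Min(I)` is finite for
every nonzero ideal `I` of `R`. -/
theorem starMin_finite_of_acc_radical_quasiStarIdeals {R K : Type*} [CommRing R]
    [IsDomain R] [Field K] [Algebra R K] [IsFractionRing R K]
    (s : SemistarOperation R K) (hs : s.FiniteType)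
    (hacc : ∀ f : ℕ →o Ideal R, (∀ n, s.IsQuasiStarIdeal (f n) ∧ (f n).radical = f n) →
      ∃ n, ∀ m, n ≤ m → f m = f n) :
    ∀ I : Ideal R, I ≠ ⊥ → (s.starMin I).Finite := by
  intro I hI
  have := SemistarOperation.wellFoundedGT_radicalQuasiStarIdeal hacc
  rw [← SemistarOperation.starMin_radical_contract hI]
  exact SemistarOperation.starMin_finite_of_wellFoundedGT hs
    ⟨_, SemistarOperation.isQuasiStarIdeal_radical_contract hs hI, Ideal.radical_idem _⟩
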